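/- arXiv:1901.09738 — 3 statements merged into one kernel-verified Lean document; each statement's English description precedes it below -/
import Mathlib

section
/- Consider the linear program: minimize R₃ n₃ + R₄ (F - n₁ - n₂ - n₃) subject to α n₁ + n₂ ≤ α F β_c, n₂ + n₃ ≤ F β_e, n₁ + n₂ + n₃ ≤ F, n₁, n₂, n₃ ≥ 0 with R₃ ≥ R₄ > 0, α > 1, 0 ≤ β_c ≤ 1, 0 ≤ β_e ≤ 1, and α β_c ≤ 1. Then an optimal solution has n₃ = 0, n₂ = min(α F β_c, F β_e), n₁ = F max(β_c - min(β_c, β_e/α), 0), and the optimal value is R₄ (F - n₁ - n₂). -/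
/-!
Putting a task on route 3 costs `R₃ ≥ R₄`, so `n₃ = 0`, and the problem is to maximise
`n₁ + n₂`. The caching constraint gives `n₁ ≤ (αFβ_c - n₂)/α`, and `(c - x)/α + x` is
increasing in `x` because `α ≥ 1`; hence `n₂` should be as large as the constraints allow,
`min(αFβ_c, Fβ_e)`, with the caching constraint tight.
-/

section CachingLP

variable {α c : ℝ}

theorem sub_div_add_le_sub_div_add (hα : 1 ≤ α) {x y : ℝ} (hxy : x ≤ y) :
    (c - x) / α + x ≤ (c - y) / α + y := by
  have hα0 : 0 < α := by linarith
  have hdiff : (c - y) / α + y - ((c - x) / α + x) = (y - x) * (α - 1) / α := by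
    field_simp
    ring
  have hnonneg : 0 ≤ (y - x) * (α - 1) / α := by
    apply div_nonneg (mul_nonneg _ _) hα0.le <;> linarith
  linarith

theorem add_le_sub_min_div_add_min (hα : 1 ≤ α) {e m₁ m₂ : ℝ} (h₁ : α * m₁ + m₂ ≤ c)
    (h₂ : m₂ ≤ e) (hm₁ : 0 ≤ m₁) : m₁ + m₂ ≤ (c - min c e) / α + min c e := by
  have hα0 : 0 < α := by linarith
  have hm₂ : m₂ ≤ min c e := le_min (by nlinarith) h₂
  calc m₁ + m₂ ≤ (c - m₂) / α + m₂ := by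
        gcongr
        rw [le_div_iff₀ hα0]
        linarith
    _ ≤ (c - min c e) / α + min c e := sub_div_add_le_sub_div_add hα hm₂

end CachingLP

theorem stmt6_general (R3 R4 α F βc βe : ℝ)
    (hR4 : 0 < R4) (hR : R4 ≤ R3) (hα : 1 < α) (hF : 0 < F)
    (hβc0 : 0 ≤ βc) (hβe0 : 0 ≤ βe)
    (hαβc : α * βc ≤ 1) :
    let n1 := F * max (βc - min βc (βe / α)) 0
    let n2 := min (α * F * βc) (F * βe)
    (α * n1 + n2 ≤ α * F * βc ∧ n2 + 0 ≤ F * βe ∧ n1 + n2 + 0 ≤ F ∧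
      0 ≤ n1 ∧ 0 ≤ n2) ∧
    (∀ m1 m2 m3 : ℝ, α * m1 + m2 ≤ α * F * βc → m2 + m3 ≤ F * βe →
      m1 + m2 + m3 ≤ F → 0 ≤ m1 → 0 ≤ m2 → 0 ≤ m3 →
      R4 * (F - n1 - n2) ≤ R3 * m3 + R4 * (F - m1 - m2 - m3)) := by
  intro n1 n2
  have hα0 : 0 < α := by linarith
  have hn2 : α * F * min βc (βe / α) = n2 := by
    rw [mul_min_of_nonneg _ _ (by positivity)]
    field_simp
    rfl
  have hn1 : n1 = (α * F * βc - n2) / α := by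
    rw [← hn2, show n1 = F * max (βc - min βc (βe / α)) 0 from rfl,
      max_eq_left (sub_nonneg.mpr (min_le_left _ _))]
    field_simp
  refine ⟨⟨?_, by rw [add_zero]; exact min_le_right _ _, ?_, by positivity, by positivity⟩, ?_⟩
  · rw [hn1, mul_div_cancel₀ _ hα0.ne']
    linarith
  · calc n1 + n2 + 0 ≤ (α * F * βc - α * F * βc) / α + α * F * βc := by
          rw [add_zero, hn1]
          exact sub_div_add_le_sub_div_add hα.le (min_le_left _ _)
      _ = F * (α * βc) := by ring
      _ ≤ F := mul_le_of_le_one_right hF.le hαβc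
  · intro m1 m2 m3 h₁ h₂ _ hm₁ _ hm₃
    have hsum : m1 + m2 ≤ n1 + n2 := by
      rw [hn1]
      exact add_le_sub_min_div_add_min hα.le h₁ (by linarith) hm₁
    nlinarith [mul_le_mul_of_nonneg_left hsum hR4.le, mul_le_mul_of_nonneg_right hR hm₃]

/-- LP: minimize `R₃ n₃ + R₄ (F - n₁ - n₂ - n₃)` subject to
`α n₁ + n₂ ≤ α F β_c`, `n₂ + n₃ ≤ F βₑ`, `n₁ + n₂ + n₃ ≤ F`, `n ≥ 0`,
with `R₃ ≥ R₄ > 0`, `α > 1`, `0 ≤ β_c ≤ 1`, `0 ≤ βₑ ≤ 1`, `α β_c ≤ 1`.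
Then `n₃ = 0`, `n₂ = min(α F β_c, F βₑ)`, `n₁ = F max(β_c - min(β_c, βₑ/α), 0)`
is feasible and optimal, with optimal value `R₄ (F - n₁ - n₂)`. -/
theorem stmt6 (R3 R4 α F βc βe : ℝ)
    (hR4 : 0 < R4) (hR : R4 ≤ R3) (hα : 1 < α) (hF : 0 < F)
    (hβc0 : 0 ≤ βc) (hβc1 : βc ≤ 1) (hβe0 : 0 ≤ βe) (hβe1 : βe ≤ 1)
    (hαβc : α * βc ≤ 1) :
    let n1 := F * max (βc - min βc (βe / α)) 0
    let n2 := min (α * F * βc) (F * βe)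
    (α * n1 + n2 ≤ α * F * βc ∧ n2 + 0 ≤ F * βe ∧ n1 + n2 + 0 ≤ F ∧
      0 ≤ n1 ∧ 0 ≤ n2) ∧
    (∀ m1 m2 m3 : ℝ, α * m1 + m2 ≤ α * F * βc → m2 + m3 ≤ F * βe →
      m1 + m2 + m3 ≤ F → 0 ≤ m1 → 0 ≤ m2 → 0 ≤ m3 →
      R4 * (F - n1 - n2) ≤ R3 * m3 + R4 * (F - m1 - m2 - m3)) :=
  stmt6_general R3 R4 α F βc βe hR4 hR hα hF hβc0 hβe0 hαβc
end

section
/- In the symmetric scenario with α ≤ 1 (output size at most input size), the optimal value of the route-allocation LP 'minimize R₃ n₃ + R₄ (F - n₁ - n₂ - n₃) subject to α n₁ + n₂ ≤ C/I, n₂ + n₃ ≤ F β_e, n₁ + n₂ + n₃ ≤ F, n ≥ 0' is attained with n₂ = n₃ = 0 and n₁ = min(C/(αI), F), where R₃ = I/(τ - Iw/f₁) ≥ R₄ = αI/τ. -/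
/-- Symmetric scenario with `α ≤ 1`: the route-allocation LP
'minimize `R₃ n₃ + R₄ (F - n₁ - n₂ - n₃)` s.t. `α n₁ + n₂ ≤ C/I`, `n₂ + n₃ ≤ F βₑ`,
`n₁ + n₂ + n₃ ≤ F`, `n ≥ 0`' attains its optimum at `n₂ = n₃ = 0`,
`n₁ = min(C/(αI), F)`, where `R₃ = I/(τ - Iw/f₁)` and `R₄ = αI/τ`. -/
theorem stmt7 (α I w f1 τ C βe F : ℝ)
    (hα0 : 0 < α) (hα1 : α ≤ 1) (hI : 0 < I) (hw : 0 < w) (hf1 : 0 < f1)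
    (hτ : I * w / f1 < τ) (hC : 0 ≤ C) (hβe0 : 0 ≤ βe) (hβe1 : βe ≤ 1) (hF : 0 < F) :
    let R3 := I / (τ - I * w / f1)
    let R4 := α * I / τ
    let n1 := min (C / (α * I)) F
    (α * n1 + 0 ≤ C / I ∧ (0 : ℝ) + 0 ≤ F * βe ∧ n1 + 0 + 0 ≤ F ∧ 0 ≤ n1) ∧
    (∀ m1 m2 m3 : ℝ, α * m1 + m2 ≤ C / I → m2 + m3 ≤ F * βe → m1 + m2 + m3 ≤ F →
      0 ≤ m1 → 0 ≤ m2 → 0 ≤ m3 →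
      R4 * (F - n1) ≤ R3 * m3 + R4 * (F - m1 - m2 - m3)) := by
  intro R3 R4 n1
  have hIw : 0 < I * w / f1 := by positivity
  have hτ0 : 0 < τ := lt_trans hIw hτ
  have hden : 0 < τ - I * w / f1 := sub_pos.mpr hτ
  have hαI : 0 < α * I := mul_pos hα0 hI
  have hn1a : n1 ≤ C / (α * I) := min_le_left _ _
  have hn1F : n1 ≤ F := min_le_right _ _
  have hn10 : 0 ≤ n1 := le_min (by positivity) hF.le
  have hR40 : 0 ≤ R4 := by positivity
  have hR34 : R4 ≤ R3 := by
    have h1 : α * I / τ ≤ I / τ := by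
      gcongr
      nlinarith
    have h2 : I / τ ≤ I / (τ - I * w / f1) := by
      gcongr
      linarith
    exact le_trans h1 h2
  refine ⟨⟨?_, by simpa using mul_nonneg hF.le hβe0, by linarith, hn10⟩, ?_⟩
  · have : α * n1 ≤ α * (C / (α * I)) := by
      exact mul_le_mul_of_nonneg_left hn1a hα0.le
    have heq : α * (C / (α * I)) = C / I := by
      field_simp
    linarith
  · intro m1 m2 m3 h1 h2 h3 hm1 hm2 hm3
    -- m1 + m2 ≤ n1
    have key : m1 + m2 ≤ n1 := by
      apply le_min
      · rw [le_div_iff₀ hαI]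
        have h1' := (le_div_iff₀ hI).mp h1
        nlinarith [mul_nonneg hm2 hI.le]
      · linarith
    have h4 : R4 * (m1 + m2 + m3 - n1) ≤ R4 * m3 + R4 * (m1 + m2 - n1) := by
      nlinarith
    nlinarith [mul_le_mul_of_nonneg_right hR34 hm3,
      mul_le_mul_of_nonneg_left key hR40]
end

section
/- The function f ↦ 1 - αβ_c - (1 - τ/(α(τ - Iw/f)))(β_e(f) - αβ_c), where β_e(f) = Ē/(μIwf²), first decreases and then increases in f on the interval (Iw/((1-1/α)τ), √(FĒ/(μwC))), provided the interval is nonempty and all quantities are positive. -/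
/-!
The derivative of the ratio is `-Ψ(f) / (α M (τ f - c)² f³)` for an explicit cubic `Ψ`, so the
ratio decreases where `Ψ > 0` and increases where `Ψ < 0`. The cubic `Ψ` is strictly concave on
`f ≥ 0`; at the left end of the interval the factor `(α - 1) τ f - α c` of `Ψ` vanishes and
`Ψ > 0`, at the right end the factor `Ē - K M f²` vanishes and `Ψ < 0`. Concavity turns the root
between them into the only sign change of `Ψ`, which is the turning point of the ratio.
-/

open Set

noncomputable section

/-- The ratio of the statement written with `c = I w`, `M = μ I w`, `E = Ē` and `K = α β_c`. -/
def bandwidthRatio (α τ c M E K : ℝ) (f : ℝ) : ℝ :=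
  1 - K - (1 - τ / (α * (τ - c / f))) * (E / (M * f ^ 2) - K)

def bandwidthRatioNumer (α τ c M E K : ℝ) (f : ℝ) : ℝ :=
  τ * c * f * (E - K * M * f ^ 2) - 2 * E * (τ * f - c) * ((α - 1) * τ * f - α * c)

end

section Derivative

variable {α τ c M E K : ℝ}

theorem hasDerivAt_bandwidthRatio {x : ℝ} (hα : α ≠ 0) (hM : M ≠ 0) (hx : x ≠ 0)
    (hτx : τ * x - c ≠ 0) :
    HasDerivAt (bandwidthRatio α τ c M E K)
      (-bandwidthRatioNumer α τ c M E K x / (α * M * (τ * x - c) ^ 2 * x ^ 3)) x := by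
  have hτcx : τ - c / x ≠ 0 := by
    rwa [sub_div' hx, div_ne_zero_iff, and_iff_left hx]
  have hinner : HasDerivAt (fun y => α * (τ - c / y)) (α * (c / x ^ 2)) x := by
    simpa [div_eq_mul_inv] using
      (((hasDerivAt_inv hx).const_mul c).const_sub τ).const_mul α
  have hfactor := ((hasDerivAt_const x τ).div hinner (mul_ne_zero hα hτcx)).const_sub 1
  have hbeta := ((hasDerivAt_const x E).div ((hasDerivAt_pow 2 x).const_mul M)
    (mul_ne_zero hM (pow_ne_zero 2 hx))).sub_const K
  refine ((hfactor.mul hbeta).const_sub (1 - K)).congr_deriv ?_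
  simp only [bandwidthRatioNumer, Pi.div_apply]
  field_simp
  ring

theorem strictConcaveOn_bandwidthRatioNumer (hα : 1 < α) (hτ : 0 < τ) (hE : 0 < E)
    (hc : 0 ≤ c) (hM : 0 ≤ M) (hK : 0 ≤ K) :
    StrictConcaveOn ℝ (Ici 0) (bandwidthRatioNumer α τ c M E K) := by
  refine strictConcaveOn_of_slope_strict_anti_adjacent (convex_Ici 0) ?_
  intro x y z hx hz hxy hyz
  set Ψ := bandwidthRatioNumer α τ c M E K
  have hcurv : 0 < 2 * E * (α - 1) * τ ^ 2 + τ * c * K * M * (x + y + z) := by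
    have : 0 ≤ x + y + z := by linarith [mem_Ici.1 hx, mem_Ici.1 hz]
    have : 0 < 2 * E * (α - 1) * τ ^ 2 := by
      have := sub_pos.2 hα
      positivity
    positivity
  have hthree : (Ψ y - Ψ x) * (z - y) - (Ψ z - Ψ y) * (y - x) =
      (z - y) * (y - x) * (z - x) * (2 * E * (α - 1) * τ ^ 2 + τ * c * K * M * (x + y + z)) := by
    simp only [Ψ, bandwidthRatioNumer]
    ring
  have hgap : 0 < (z - y) * (y - x) * (z - x) := by
    have := sub_pos.2 hxy; have := sub_pos.2 hyz; have := sub_pos.2 (hxy.trans hyz)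
    positivity
  rw [div_lt_div_iff₀ (sub_pos.2 hyz) (sub_pos.2 hxy)]
  nlinarith [mul_pos hgap hcurv]

end Derivative

section Concave

variable {s : Set ℝ} {φ : ℝ → ℝ} {a r x : ℝ}

theorem StrictConcaveOn.pos_of_lt_of_lt_of_eq_zero (hφ : StrictConcaveOn ℝ s φ)
    (ha : a ∈ s) (hr : r ∈ s) (hφa : 0 ≤ φ a) (hφr : φ r = 0)
    (hax : a < x) (hxr : x < r) : 0 < φ x := by
  have hslope := hφ.slope_anti_adjacent ha hr hax hxr
  rw [hφr, div_lt_div_iff₀ (sub_pos.2 hxr) (sub_pos.2 hax)] at hslope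
  nlinarith [mul_nonneg hφa (sub_pos.2 hxr).le]

theorem StrictConcaveOn.neg_of_lt_of_eq_zero (hφ : StrictConcaveOn ℝ s φ)
    (ha : a ∈ s) (hx : x ∈ s) (hφa : 0 ≤ φ a) (hφr : φ r = 0)
    (har : a < r) (hrx : r < x) : φ x < 0 := by
  have hslope := hφ.slope_anti_adjacent ha hx har hrx
  rw [hφr, div_lt_div_iff₀ (sub_pos.2 hrx) (sub_pos.2 har)] at hslope
  nlinarith [mul_nonneg hφa (sub_pos.2 hrx).le]

end Concave

section Monotone

variable {α τ c M E K : ℝ} {s : Set ℝ}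

theorem strictAntiOn_bandwidthRatio (hα : 0 < α) (hM : 0 < M) (hs : Convex ℝ s)
    (hdom : ∀ x ∈ s, 0 < x ∧ c < τ * x)
    (hnumer : ∀ x ∈ interior s, 0 < bandwidthRatioNumer α τ c M E K x) :
    StrictAntiOn (bandwidthRatio α τ c M E K) s := by
  have hderiv : ∀ x ∈ s, HasDerivAt (bandwidthRatio α τ c M E K)
      (-bandwidthRatioNumer α τ c M E K x / (α * M * (τ * x - c) ^ 2 * x ^ 3)) x := fun x hx =>
    hasDerivAt_bandwidthRatio hα.ne' hM.ne' (hdom x hx).1.ne' (sub_pos.2 (hdom x hx).2).ne'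
  refine strictAntiOn_of_hasDerivWithinAt_neg hs
    (fun x hx => (hderiv x hx).continuousAt.continuousWithinAt)
    (fun x hx => (hderiv x (interior_subset hx)).hasDerivWithinAt) fun x hx => ?_
  obtain ⟨hx0, hτx⟩ := hdom x (interior_subset hx)
  have := sub_pos.2 hτx
  exact div_neg_of_neg_of_pos (neg_neg_of_pos (hnumer x hx)) (by positivity)

theorem strictMonoOn_bandwidthRatio (hα : 0 < α) (hM : 0 < M) (hs : Convex ℝ s)
    (hdom : ∀ x ∈ s, 0 < x ∧ c < τ * x)
    (hnumer : ∀ x ∈ interior s, bandwidthRatioNumer α τ c M E K x < 0) :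
    StrictMonoOn (bandwidthRatio α τ c M E K) s := by
  have hderiv : ∀ x ∈ s, HasDerivAt (bandwidthRatio α τ c M E K)
      (-bandwidthRatioNumer α τ c M E K x / (α * M * (τ * x - c) ^ 2 * x ^ 3)) x := fun x hx =>
    hasDerivAt_bandwidthRatio hα.ne' hM.ne' (hdom x hx).1.ne' (sub_pos.2 (hdom x hx).2).ne'
  refine strictMonoOn_of_hasDerivWithinAt_pos hs
    (fun x hx => (hderiv x hx).continuousAt.continuousWithinAt)
    (fun x hx => (hderiv x (interior_subset hx)).hasDerivWithinAt) fun x hx => ?_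
  obtain ⟨hx0, hτx⟩ := hdom x (interior_subset hx)
  have := sub_pos.2 hτx
  exact div_pos (neg_pos.2 (hnumer x hx)) (by positivity)

end Monotone

section Turning

variable {α τ c M E K a b : ℝ}

theorem pos_and_lt_mul_of_sub_one_mul_mul_eq (hα : 1 < α) (hτ : 0 < τ) (hc : 0 < c)
    (ha : (α - 1) * τ * a = α * c) : 0 < a ∧ c < τ * a := by
  have hατ : 0 < (α - 1) * τ := mul_pos (sub_pos.2 hα) hτ
  have ha0 : 0 < a := pos_of_mul_pos_right (ha ▸ mul_pos (by linarith) hc) hατ.le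
  have hgap : α * (τ * a - c) = τ * a := by linear_combination ha
  have : 0 < α * (τ * a - c) := by rw [hgap]; positivity
  exact ⟨ha0, sub_pos.1 (pos_of_mul_pos_right this (by linarith))⟩

theorem exists_bandwidthRatioNumer_sign_change (hα : 1 < α) (hτ : 0 < τ) (hc : 0 < c)
    (hM : 0 < M) (hE : 0 < E) (hK : 0 < K) (ha : (α - 1) * τ * a = α * c)
    (hb : K * M * b ^ 2 = E) (hab : a < b) :
    ∃ r ∈ Ioo a b, (∀ x ∈ Ioo a r, 0 < bandwidthRatioNumer α τ c M E K x) ∧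
      ∀ x ∈ Ioo r b, bandwidthRatioNumer α τ c M E K x < 0 := by
  set Ψ := bandwidthRatioNumer α τ c M E K
  obtain ⟨ha0, hτa⟩ := pos_and_lt_mul_of_sub_one_mul_mul_eq hα hτ hc ha
  have hΨa : 0 < Ψ a := by
    have hEa : 0 < E - K * M * a ^ 2 := by
      have : 0 < b ^ 2 - a ^ 2 := by nlinarith
      nlinarith [mul_pos (mul_pos hK hM) this]
    have : Ψ a = τ * c * a * (E - K * M * a ^ 2) := by
      simp only [Ψ, bandwidthRatioNumer, ha]; ring
    rw [this]; positivity
  have hΨb : Ψ b < 0 := by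
    have hτb : 0 < τ * b - c := by nlinarith
    have hαb : 0 < (α - 1) * τ * b - α * c := by nlinarith [mul_pos (sub_pos.2 hα) hτ]
    have : Ψ b = -(2 * E * (τ * b - c) * ((α - 1) * τ * b - α * c)) := by
      simp only [Ψ, bandwidthRatioNumer, hb]; ring
    rw [this, neg_neg_iff_pos]; positivity
  have hcont : Continuous Ψ := by
    simp only [Ψ]; unfold bandwidthRatioNumer; fun_prop
  obtain ⟨r, hr, hΨr⟩ := intermediate_value_Ioo' hab.le hcont.continuousOn ⟨hΨb, hΨa⟩
  have hconc := strictConcaveOn_bandwidthRatioNumer hα hτ hE hc.le hM.le hK.le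
  have hmem : ∀ {x}, a ≤ x → x ∈ Ici (0 : ℝ) := fun hx => (ha0.le.trans hx : _)
  refine ⟨r, hr, fun x hx => ?_, fun x hx => ?_⟩
  · exact hconc.pos_of_lt_of_lt_of_eq_zero (hmem le_rfl) (hmem hr.1.le) hΨa.le hΨr hx.1 hx.2
  · exact hconc.neg_of_lt_of_eq_zero (hmem le_rfl) (hmem (hr.1.trans hx.1).le) hΨa.le hΨr
      hr.1 hx.1

theorem exists_antitoneOn_monotoneOn_bandwidthRatio (hα : 1 < α) (hτ : 0 < τ) (hc : 0 < c)
    (hM : 0 < M) (hE : 0 < E) (hK : 0 < K) (ha : (α - 1) * τ * a = α * c)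
    (hb : K * M * b ^ 2 = E) (hab : a < b) :
    ∃ r ∈ Icc a b, AntitoneOn (bandwidthRatio α τ c M E K) (Ioo a b ∩ Iic r) ∧
      MonotoneOn (bandwidthRatio α τ c M E K) (Ioo a b ∩ Ici r) := by
  obtain ⟨r, hr, hpos, hneg⟩ :=
    exists_bandwidthRatioNumer_sign_change hα hτ hc hM hE hK ha hb hab
  obtain ⟨ha0, hτa⟩ := pos_and_lt_mul_of_sub_one_mul_mul_eq hα hτ hc ha
  have hdom : ∀ x ∈ Ioo a b, 0 < x ∧ c < τ * x := fun x hx =>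
    ⟨ha0.trans hx.1, hτa.trans (mul_lt_mul_of_pos_left hx.1 hτ)⟩
  have hα0 : 0 < α := by linarith
  refine ⟨r, Ioo_subset_Icc_self hr, ?_, ?_⟩
  · refine (strictAntiOn_bandwidthRatio hα0 hM ((convex_Ioo a b).inter (convex_Iic r))
      (fun x hx => hdom x hx.1) fun x hx => hpos x ?_).antitoneOn
    rw [interior_inter, interior_Ioo, interior_Iic] at hx
    exact ⟨hx.1.1, hx.2⟩
  · refine (strictMonoOn_bandwidthRatio hα0 hM ((convex_Ioo a b).inter (convex_Ici r))
      (fun x hx => hdom x hx.1) fun x hx => hneg x ?_).monotoneOn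
    rw [interior_inter, interior_Ioo, interior_Ici] at hx
    exact ⟨hx.2, hx.1.2⟩

end Turning

/-- The bandwidth-ratio function
`f ↦ 1 - α β_c - (1 - τ/(α(τ - Iw/f))) (βₑ(f) - α β_c)` with `βₑ(f) = Ē/(μ I w f²)`
first decreases and then increases on the interval
`(Iw/((1-1/α)τ), √(F Ē/(μ w C)))`, provided the interval is nonempty. -/
theorem stmt11 (α τ I w Ebar μ C F βc a b : ℝ)
    (hα : 1 < α) (hτ : 0 < τ) (hI : 0 < I) (hw : 0 < w)
    (hE : 0 < Ebar) (hμ : 0 < μ) (hC : 0 < C) (hF : 0 < F)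
    (hβc : βc = C / (α * I * F))
    (ha : a = I * w / ((1 - 1 / α) * τ))
    (hb : b = Real.sqrt (F * Ebar / (μ * w * C))) (hab : a < b) :
    let g : ℝ → ℝ := fun f =>
      1 - α * βc - (1 - τ / (α * (τ - I * w / f))) * (Ebar / (μ * I * w * f ^ 2) - α * βc)
    ∃ f0 ∈ Set.Icc a b,
      AntitoneOn g (Set.Ioo a b ∩ Set.Iic f0) ∧
      MonotoneOn g (Set.Ioo a b ∩ Set.Ici f0) := by
  have hα1 : α - 1 ≠ 0 := sub_ne_zero.2 hα.ne'
  have hK : α * βc = C / (I * F) := by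
    rw [hβc]; field_simp
  have ha' : (α - 1) * τ * a = α * (I * w) := by
    rw [ha]; field_simp
  have hb' : α * βc * (μ * I * w) * b ^ 2 = Ebar := by
    rw [hb, Real.sq_sqrt (by positivity), hK]; field_simp
  exact exists_antitoneOn_monotoneOn_bandwidthRatio hα hτ (by positivity) (by positivity) hE
    (by rw [hK]; positivity) ha' hb' hab
end
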